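/- arXiv:2002.08816 — 9 statements merged into one kernel-verified Lean document; each statement's English description precedes it below -/
import Mathlib

section
/- Let p₀ be a quartic polynomial on a uniform mesh of size Δx satisfying: cell averages (1/Δx)∫_{I_{i+j}} p₀ dx = ū_{i+j} for j = −1, 0, 1, and first-order moments (1/Δx)∫_{I_{i+j}} p₀(x)(x−x_{i+j})/Δx dx = v̄_{i+j} for j = −1, 1. Then its first-order moment on I_i equals (5/76)ū_{i+1} − (5/76)ū_{i-1} − (11/38)v̄_{i-1} − (11/38)v̄_{i+1}. -/
open intervalIntegral

lemma int5aux (a b d0 d1 d2 d3 d4 d5 : ℝ) :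
    (∫ x in a..b, (d0 + d1*x + d2*x^2 + d3*x^3 + d4*x^4 + d5*x^5)) =
      d0*(b-a) + d1*(b^2-a^2)/2 + d2*(b^3-a^3)/3 + d3*(b^4-a^4)/4
        + d4*(b^5-a^5)/5 + d5*(b^6-a^6)/6 := by
  have I : ∀ f : ℝ → ℝ, Continuous f → IntervalIntegrable f MeasureTheory.volume a b :=
    fun f hf => hf.intervalIntegrable a b
  have h1 : (fun x : ℝ => d0 + d1*x + d2*x^2 + d3*x^3 + d4*x^4 + d5*x^5)
      = fun x : ℝ => d0 + d1*x^1 + d2*x^2 + d3*x^3 + d4*x^4 + d5*x^5 := by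
    funext x; ring
  show (∫ x in a..b, (d0 + d1*x + d2*x^2 + d3*x^3 + d4*x^4 + d5*x^5)) = _
  rw [h1]
  rw [integral_add (by exact I _ (by continuity)) (by exact I _ (by continuity)),
      integral_add (by exact I _ (by continuity)) (by exact I _ (by continuity)),
      integral_add (by exact I _ (by continuity)) (by exact I _ (by continuity)),
      integral_add (by exact I _ (by continuity)) (by exact I _ (by continuity)),
      integral_add (by exact I _ (by continuity)) (by exact I _ (by continuity))]
  simp only [integral_const_mul, integral_pow, integral_const, smul_eq_mul]
  ring

set_option maxHeartbeats 2000000 in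
theorem stmt_3 (Δx xi ubarm1 ubar0 ubarp1 vbarm1 vbarp1 : ℝ) (hΔx : 0 < Δx)
    (c0 c1 c2 c3 c4 : ℝ) (p : ℝ → ℝ)
    (hp : ∀ x, p x = c0 + c1 * x + c2 * x^2 + c3 * x^3 + c4 * x^4)
    (havgm1 : (1/Δx) * ∫ x in (xi - 3/2 * Δx)..(xi - 1/2 * Δx), p x = ubarm1)
    (havg0 : (1/Δx) * ∫ x in (xi - 1/2 * Δx)..(xi + 1/2 * Δx), p x = ubar0)
    (havgp1 : (1/Δx) * ∫ x in (xi + 1/2 * Δx)..(xi + 3/2 * Δx), p x = ubarp1)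
    (hmomm1 : (1/Δx) * ∫ x in (xi - 3/2 * Δx)..(xi - 1/2 * Δx),
        p x * ((x - (xi - Δx))/Δx) = vbarm1)
    (hmomp1 : (1/Δx) * ∫ x in (xi + 1/2 * Δx)..(xi + 3/2 * Δx),
        p x * ((x - (xi + Δx))/Δx) = vbarp1) :
    (1/Δx) * ∫ x in (xi - 1/2 * Δx)..(xi + 1/2 * Δx), p x * ((x - xi)/Δx)
      = (5/76) * ubarp1 - (5/76) * ubarm1 - (11/38) * vbarm1 - (11/38) * vbarp1 := by
  have hΔ : Δx ≠ 0 := ne_of_gt hΔx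
  -- averages
  have A : ∀ a b : ℝ, (∫ x in a..b, p x) =
      c0*(b-a) + c1*(b^2-a^2)/2 + c2*(b^3-a^3)/3 + c3*(b^4-a^4)/4
        + c4*(b^5-a^5)/5 + 0*(b^6-a^6)/6 := by
    intro a b
    rw [show (fun x : ℝ => p x)
        = fun x : ℝ => c0 + c1*x + c2*x^2 + c3*x^3 + c4*x^4 + 0*x^5 from
      funext fun x => by rw [hp]; ring]
    exact int5aux a b c0 c1 c2 c3 c4 0
  -- moments
  have M : ∀ m a b : ℝ, (∫ x in a..b, p x * ((x - m)/Δx)) =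
      (-(c0*m)/Δx)*(b-a) + ((c0-c1*m)/Δx)*(b^2-a^2)/2 + ((c1-c2*m)/Δx)*(b^3-a^3)/3
        + ((c2-c3*m)/Δx)*(b^4-a^4)/4 + ((c3-c4*m)/Δx)*(b^5-a^5)/5
        + (c4/Δx)*(b^6-a^6)/6 := by
    intro m a b
    rw [show (fun x : ℝ => p x * ((x - m)/Δx))
        = fun x : ℝ => (-(c0*m)/Δx) + ((c0-c1*m)/Δx)*x + ((c1-c2*m)/Δx)*x^2
            + ((c2-c3*m)/Δx)*x^3 + ((c3-c4*m)/Δx)*x^4 + (c4/Δx)*x^5 from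
      funext fun x => by rw [hp]; field_simp; ring]
    exact int5aux a b _ _ _ _ _ _
  rw [A] at havgm1 havgp1
  rw [M] at hmomm1 hmomp1 ⊢
  subst havgm1 havgp1 hmomm1 hmomp1
  field_simp
  ring
end

section
/- Let p₁ be the unique quadratic polynomial satisfying (1/Δx)∫_{I_{i-1}} p₁ dx = ū_{i-1}, (1/Δx)∫_{I_i} p₁ dx = ū_i, and (1/Δx)∫_{I_i} p₁(x)(x−x_i)/Δx dx = v̄_i on a uniform mesh of size Δx. Then p₁(x_{i+1/2}) = (1/6)ū_{i-1} + (5/6)ū_i + 8v̄_i. -/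
open intervalIntegral

lemma cubic_integral (A B C D lo hi : ℝ) :
    (∫ x in lo..hi, (A + B*x + C*x^2 + D*x^3)) =
      A*(hi-lo) + B*(hi^2-lo^2)/2 + C*(hi^3-lo^3)/3 + D*(hi^4-lo^4)/4 := by
  have : (∫ x in lo..hi, (A + B*x + C*x^2 + D*x^3)) =
      A*(hi-lo) + B*((hi^2-lo^2)/2) + C*((hi^3-lo^3)/3) + D*((hi^4-lo^4)/4) := by
    have h1 : IntervalIntegrable (fun x : ℝ => A) MeasureTheory.volume lo hi :=
      (continuous_const).intervalIntegrable _ _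
    have h2 : IntervalIntegrable (fun x : ℝ => B*x) MeasureTheory.volume lo hi :=
      (continuous_const.mul continuous_id).intervalIntegrable _ _
    have h3 : IntervalIntegrable (fun x : ℝ => C*x^2) MeasureTheory.volume lo hi :=
      (continuous_const.mul (continuous_pow 2)).intervalIntegrable _ _
    have h4 : IntervalIntegrable (fun x : ℝ => D*x^3) MeasureTheory.volume lo hi :=
      (continuous_const.mul (continuous_pow 3)).intervalIntegrable _ _
    rw [integral_add (h1.add h2 |>.add h3) h4, integral_add (h1.add h2) h3,
      integral_add h1 h2, integral_const, integral_const_mul, integral_const_mul,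
      integral_const_mul, integral_id, integral_pow, integral_pow]
    push_cast
    simp only [smul_eq_mul]
    ring
  linarith [this]

theorem stmt_4 (Δx xi ubarm1 ubar0 vbar0 : ℝ) (hΔx : 0 < Δx)
    (a b c : ℝ) (p : ℝ → ℝ)
    (hp : ∀ x, p x = a + b * x + c * x^2)
    (havgm1 : (1/Δx) * ∫ x in (xi - 3/2 * Δx)..(xi - 1/2 * Δx), p x = ubarm1)
    (havg0 : (1/Δx) * ∫ x in (xi - 1/2 * Δx)..(xi + 1/2 * Δx), p x = ubar0)
    (hmom0 : (1/Δx) * ∫ x in (xi - 1/2 * Δx)..(xi + 1/2 * Δx),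
        p x * ((x - xi)/Δx) = vbar0) :
    p (xi + 1/2 * Δx) = (1/6) * ubarm1 + (5/6) * ubar0 + 8 * vbar0 := by
  have hne : Δx ≠ 0 := ne_of_gt hΔx
  have e1 : (∫ x in (xi - 3/2 * Δx)..(xi - 1/2 * Δx), p x) =
      ∫ x in (xi - 3/2 * Δx)..(xi - 1/2 * Δx), (a + b*x + c*x^2 + 0*x^3) := by
    apply integral_congr; intro x _; simp only [hp]; ring
  have e2 : (∫ x in (xi - 1/2 * Δx)..(xi + 1/2 * Δx), p x) =
      ∫ x in (xi - 1/2 * Δx)..(xi + 1/2 * Δx), (a + b*x + c*x^2 + 0*x^3) := by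
    apply integral_congr; intro x _; simp only [hp]; ring
  have e3 : (∫ x in (xi - 1/2 * Δx)..(xi + 1/2 * Δx), p x * ((x - xi)/Δx)) =
      ∫ x in (xi - 1/2 * Δx)..(xi + 1/2 * Δx),
        ((-a*xi/Δx) + ((a - b*xi)/Δx)*x + ((b - c*xi)/Δx)*x^2 + (c/Δx)*x^3) := by
    apply integral_congr; intro x _; simp only [hp]; field_simp; ring
  rw [e1, cubic_integral] at havgm1
  rw [e2, cubic_integral] at havg0
  rw [e3, cubic_integral] at hmom0
  rw [hp, ← havgm1, ← havg0, ← hmom0]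
  field_simp
  ring
end

section
/- Let p₂ be the unique quadratic polynomial satisfying (1/Δx)∫_{I_i} p₂ dx = ū_i, (1/Δx)∫_{I_{i+1}} p₂ dx = ū_{i+1}, and (1/Δx)∫_{I_i} p₂(x)(x−x_i)/Δx dx = v̄_i on a uniform mesh of size Δx. Then p₂(x_{i+1/2}) = (5/6)ū_i + (1/6)ū_{i+1} + 4v̄_i. -/
open intervalIntegral

lemma integ_cubic (c0 c1 c2 c3 α β : ℝ) :
    ∫ x in α..β, (c0 + c1*x + c2*x^2 + c3*x^3) =
      c0*(β-α) + c1*(β^2-α^2)/2 + c2*(β^3-α^3)/3 + c3*(β^4-α^4)/4 := by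
  have hder : ∀ x ∈ Set.uIcc α β,
      HasDerivAt (fun x => c0*x + c1*x^2/2 + c2*x^3/3 + c3*x^4/4)
        (c0 + c1*x + c2*x^2 + c3*x^3) x := by
    intro x _
    have h : HasDerivAt (fun x => c0*x + c1*x^2/2 + c2*x^3/3 + c3*x^4/4)
        (c0*1 + c1*(2*x^1)/2 + c2*(3*x^2)/3 + c3*(4*x^3)/4) x := by
      exact ((((hasDerivAt_id x).const_mul c0).add
        (((hasDerivAt_pow 2 x).const_mul c1).div_const 2)).add
        (((hasDerivAt_pow 3 x).const_mul c2).div_const 3)).add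
        (((hasDerivAt_pow 4 x).const_mul c3).div_const 4)
    convert h using 1
    ring
  have hint : IntervalIntegrable (fun x => c0 + c1*x + c2*x^2 + c3*x^3)
      MeasureTheory.volume α β := by
    apply Continuous.intervalIntegrable
    continuity
  rw [intervalIntegral.integral_eq_sub_of_hasDerivAt hder hint]
  ring

theorem stmt_5 (Δx xi ubar0 ubarp1 vbar0 : ℝ) (hΔx : 0 < Δx)
    (a b c : ℝ) (p : ℝ → ℝ)
    (hp : ∀ x, p x = a + b * x + c * x^2)
    (havg0 : (1/Δx) * ∫ x in (xi - 1/2 * Δx)..(xi + 1/2 * Δx), p x = ubar0)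
    (havgp1 : (1/Δx) * ∫ x in (xi + 1/2 * Δx)..(xi + 3/2 * Δx), p x = ubarp1)
    (hmom0 : (1/Δx) * ∫ x in (xi - 1/2 * Δx)..(xi + 1/2 * Δx),
        p x * ((x - xi)/Δx) = vbar0) :
    p (xi + 1/2 * Δx) = (5/6) * ubar0 + (1/6) * ubarp1 + 4 * vbar0 := by
  have hΔx' : Δx ≠ 0 := ne_of_gt hΔx
  have e1 : (∫ x in (xi - 1/2 * Δx)..(xi + 1/2 * Δx), p x)
      = ∫ x in (xi - 1/2 * Δx)..(xi + 1/2 * Δx), (a + b*x + c*x^2 + 0*x^3) := by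
    apply intervalIntegral.integral_congr
    intro x _; rw [hp]; ring
  have e2 : (∫ x in (xi + 1/2 * Δx)..(xi + 3/2 * Δx), p x)
      = ∫ x in (xi + 1/2 * Δx)..(xi + 3/2 * Δx), (a + b*x + c*x^2 + 0*x^3) := by
    apply intervalIntegral.integral_congr
    intro x _; rw [hp]; ring
  have e3 : (∫ x in (xi - 1/2 * Δx)..(xi + 1/2 * Δx), p x * ((x - xi)/Δx))
      = ∫ x in (xi - 1/2 * Δx)..(xi + 1/2 * Δx),
        ((-(a*xi)/Δx) + ((a - b*xi)/Δx)*x + ((b - c*xi)/Δx)*x^2 + (c/Δx)*x^3) := by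
    apply intervalIntegral.integral_congr
    intro x _; simp only [hp]; field_simp; ring
  rw [e1, integ_cubic] at havg0
  rw [e2, integ_cubic] at havgp1
  rw [e3, integ_cubic] at hmom0
  rw [hp, ← havg0, ← havgp1, ← hmom0]
  field_simp
  ring
end

section
/- Let p₀ be the quintic polynomial determined by the cell averages ū_{i-1}, ū_i, ū_{i+1} on I_{i-1}, I_i, I_{i+1} and the first-order moments v̄_{i-1}, v̄_i, v̄_{i+1} on I_{i-1}, I_i, I_{i+1} (uniform mesh of size Δx), i.e. p₀ matches all six data. Then p₀(x_{i+1/2}) = (13/108)ū_{i-1} + (7/12)ū_i + (8/27)ū_{i+1} + (25/54)v̄_{i-1} + (241/54)v̄_i − (28/27)v̄_{i+1}. -/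
open intervalIntegral

lemma pint (k0 k1 k2 k3 k4 k5 k6 a b : ℝ) :
    ∫ x in a..b, (k0 + k1*x + k2*x^2 + k3*x^3 + k4*x^4 + k5*x^5 + k6*x^6)
    = (k0*b + k1*b^2/2 + k2*b^3/3 + k3*b^4/4 + k4*b^5/5 + k5*b^6/6 + k6*b^7/7)
    - (k0*a + k1*a^2/2 + k2*a^3/3 + k3*a^4/4 + k4*a^5/5 + k5*a^6/6 + k6*a^7/7) := by
  have h : ∀ (c : ℝ) (n : ℕ), IntervalIntegrable (fun x : ℝ => c * x ^ n) MeasureTheory.volume a b :=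
    fun c n => (Continuous.mul continuous_const (continuous_pow n)).intervalIntegrable a b
  have e : ∀ x : ℝ, k0 + k1*x + k2*x^2 + k3*x^3 + k4*x^4 + k5*x^5 + k6*x^6
      = k0*x^0 + (k1*x^1 + (k2*x^2 + (k3*x^3 + (k4*x^4 + (k5*x^5 + k6*x^6))))) := by
    intro x; ring
  simp only [e]
  rw [integral_add (h k0 0)
      ((h k1 1).add ((h k2 2).add ((h k3 3).add ((h k4 4).add ((h k5 5).add (h k6 6)))))),
    integral_add (h k1 1)
      ((h k2 2).add ((h k3 3).add ((h k4 4).add ((h k5 5).add (h k6 6))))),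
    integral_add (h k2 2) ((h k3 3).add ((h k4 4).add ((h k5 5).add (h k6 6)))),
    integral_add (h k3 3) ((h k4 4).add ((h k5 5).add (h k6 6))),
    integral_add (h k4 4) ((h k5 5).add (h k6 6)),
    integral_add (h k5 5) (h k6 6)]
  simp only [integral_const_mul, integral_pow]
  push_cast
  ring

lemma pint_avg (c0 c1 c2 c3 c4 c5 a b : ℝ) (p : ℝ → ℝ)
    (hp : ∀ x, p x = c0 + c1 * x + c2 * x^2 + c3 * x^3 + c4 * x^4 + c5 * x^5) :
    ∫ x in a..b, p x
    = (c0*b + c1*b^2/2 + c2*b^3/3 + c3*b^4/4 + c4*b^5/5 + c5*b^6/6 + 0*b^7/7)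
    - (c0*a + c1*a^2/2 + c2*a^3/3 + c3*a^4/4 + c4*a^5/5 + c5*a^6/6 + 0*a^7/7) := by
  rw [show (∫ x in a..b, p x)
      = ∫ x in a..b, (c0 + c1*x + c2*x^2 + c3*x^3 + c4*x^4 + c5*x^5 + 0*x^6) by
    congr 1; funext x; rw [hp]; ring]
  exact pint c0 c1 c2 c3 c4 c5 0 a b

lemma pint_mom (c0 c1 c2 c3 c4 c5 a b s Δx : ℝ) (p : ℝ → ℝ)
    (hp : ∀ x, p x = c0 + c1 * x + c2 * x^2 + c3 * x^3 + c4 * x^4 + c5 * x^5) :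
    ∫ x in a..b, p x * ((x - s)/Δx)
    = ((-s*c0/Δx)*b + ((c0-s*c1)/Δx)*b^2/2 + ((c1-s*c2)/Δx)*b^3/3 + ((c2-s*c3)/Δx)*b^4/4
        + ((c3-s*c4)/Δx)*b^5/5 + ((c4-s*c5)/Δx)*b^6/6 + (c5/Δx)*b^7/7)
    - ((-s*c0/Δx)*a + ((c0-s*c1)/Δx)*a^2/2 + ((c1-s*c2)/Δx)*a^3/3 + ((c2-s*c3)/Δx)*a^4/4
        + ((c3-s*c4)/Δx)*a^5/5 + ((c4-s*c5)/Δx)*a^6/6 + (c5/Δx)*a^7/7) := by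
  rw [show (∫ x in a..b, p x * ((x - s)/Δx))
      = ∫ x in a..b, ((-s*c0/Δx) + ((c0-s*c1)/Δx)*x + ((c1-s*c2)/Δx)*x^2 + ((c2-s*c3)/Δx)*x^3
          + ((c3-s*c4)/Δx)*x^4 + ((c4-s*c5)/Δx)*x^5 + (c5/Δx)*x^6) by
    congr 1; funext x; rw [hp]; ring]
  exact pint _ _ _ _ _ _ _ a b

set_option maxHeartbeats 2000000 in
theorem stmt_6 (Δx xi ubarm1 ubar0 ubarp1 vbarm1 vbar0 vbarp1 : ℝ) (hΔx : 0 < Δx)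
    (c0 c1 c2 c3 c4 c5 : ℝ) (p : ℝ → ℝ)
    (hp : ∀ x, p x = c0 + c1 * x + c2 * x^2 + c3 * x^3 + c4 * x^4 + c5 * x^5)
    (havgm1 : (1/Δx) * ∫ x in (xi - 3/2 * Δx)..(xi - 1/2 * Δx), p x = ubarm1)
    (havg0 : (1/Δx) * ∫ x in (xi - 1/2 * Δx)..(xi + 1/2 * Δx), p x = ubar0)
    (havgp1 : (1/Δx) * ∫ x in (xi + 1/2 * Δx)..(xi + 3/2 * Δx), p x = ubarp1)
    (hmomm1 : (1/Δx) * ∫ x in (xi - 3/2 * Δx)..(xi - 1/2 * Δx),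
        p x * ((x - (xi - Δx))/Δx) = vbarm1)
    (hmom0 : (1/Δx) * ∫ x in (xi - 1/2 * Δx)..(xi + 1/2 * Δx),
        p x * ((x - xi)/Δx) = vbar0)
    (hmomp1 : (1/Δx) * ∫ x in (xi + 1/2 * Δx)..(xi + 3/2 * Δx),
        p x * ((x - (xi + Δx))/Δx) = vbarp1) :
    p (xi + 1/2 * Δx) = (13/108) * ubarm1 + (7/12) * ubar0 + (8/27) * ubarp1
      + (25/54) * vbarm1 + (241/54) * vbar0 - (28/27) * vbarp1 := by
  rw [pint_avg c0 c1 c2 c3 c4 c5 _ _ p hp] at havgm1 havg0 havgp1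
  rw [pint_mom c0 c1 c2 c3 c4 c5 _ _ _ _ p hp] at hmomm1 hmom0 hmomp1
  subst havgm1 havg0 havgp1 hmomm1 hmom0 hmomp1
  rw [hp]
  have h0 : Δx ≠ 0 := ne_of_gt hΔx
  field_simp
  ring
end

section
/- Let p₁ be the quadratic polynomial satisfying (1/Δx)∫_{I_{i-1}} p₁ dx = ū_{i-1}, (1/Δx)∫_{I_i} p₁ dx = ū_i, and (1/Δx)∫_{I_i} p₁(x)(x−x_i)/Δx dx = v̄_i on a uniform mesh of size Δx. Then its Jiang–Shu smoothness indicator on I_i equals 144 v̄_i² + (13/3)(ū_{i-1} − ū_i + 12 v̄_i)². -/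
/-!
Expand `p` about the cell centre: `p x = A + B (x - xi) + c (x - xi)^2` with `B = p'(xi)`.
The first moment on `I_i` gives `v̄ = B Δx / 12`, the difference of the two cell averages gives
`ū_{i-1} - ū_i = -B Δx + c Δx^2`, and the indicator itself is `(B Δx)^2 + (13/3) (c Δx^2)^2`.
-/

open intervalIntegral

theorem integral_cubic (A B C D l u : ℝ) :
    ∫ t in l..u, (A + B * t + C * t ^ 2 + D * t ^ 3) =
      (A * u + B / 2 * u ^ 2 + C / 3 * u ^ 3 + D / 4 * u ^ 4) -
        (A * l + B / 2 * l ^ 2 + C / 3 * l ^ 3 + D / 4 * l ^ 4) := by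
  refine integral_eq_sub_of_hasDerivAt
    (f := fun t => A * t + B / 2 * t ^ 2 + C / 3 * t ^ 3 + D / 4 * t ^ 4) (fun t _ => ?_)
    ((by fun_prop : Continuous fun t : ℝ => A + B * t + C * t ^ 2 + D * t ^ 3).intervalIntegrable _ _)
  convert ((((hasDerivAt_id t).const_mul A).add ((hasDerivAt_pow 2 t).const_mul (B / 2))).add
    ((hasDerivAt_pow 3 t).const_mul (C / 3))).add ((hasDerivAt_pow 4 t).const_mul (D / 4)) using 1
  · ext s; simp only [Pi.add_apply, id]
  · norm_num; ring

theorem integral_shifted_cubic {f : ℝ → ℝ} {x₀ A B C D : ℝ}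
    (hf : ∀ x, f x = A + B * (x - x₀) + C * (x - x₀) ^ 2 + D * (x - x₀) ^ 3) (l u : ℝ) :
    ∫ x in l..u, f x =
      (A * (u - x₀) + B / 2 * (u - x₀) ^ 2 + C / 3 * (u - x₀) ^ 3 + D / 4 * (u - x₀) ^ 4) -
        (A * (l - x₀) + B / 2 * (l - x₀) ^ 2 + C / 3 * (l - x₀) ^ 3 + D / 4 * (l - x₀) ^ 4) := by
  simp_rw [hf]
  rw [integral_comp_sub_right (fun t => A + B * t + C * t ^ 2 + D * t ^ 3), integral_cubic]

theorem stmt_12 (Δx xi ubarm1 ubar0 vbar0 : ℝ) (hΔx : 0 < Δx)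
    (a b c : ℝ) (p : ℝ → ℝ)
    (hp : ∀ x, p x = a + b * x + c * x^2)
    (havgm1 : (1/Δx) * ∫ x in (xi - 3/2 * Δx)..(xi - 1/2 * Δx), p x = ubarm1)
    (havg0 : (1/Δx) * ∫ x in (xi - 1/2 * Δx)..(xi + 1/2 * Δx), p x = ubar0)
    (hmom0 : (1/Δx) * ∫ x in (xi - 1/2 * Δx)..(xi + 1/2 * Δx),
        p x * ((x - xi)/Δx) = vbar0) :
    ((∫ x in (xi - 1/2 * Δx)..(xi + 1/2 * Δx), Δx * (b + 2*c*x)^2)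
      + ∫ x in (xi - 1/2 * Δx)..(xi + 1/2 * Δx), Δx^3 * (2*c)^2)
      = 144 * vbar0^2 + (13/3) * (ubarm1 - ubar0 + 12 * vbar0)^2 := by
  have hΔx₀ : Δx ≠ 0 := hΔx.ne'
  set A := a + b * xi + c * xi ^ 2
  set B := b + 2 * c * xi
  have hp_taylor (x : ℝ) : p x = A + B * (x - xi) + c * (x - xi) ^ 2 + 0 * (x - xi) ^ 3 := by
    rw [hp]; ring
  have hmoment (x : ℝ) : p x * ((x - xi) / Δx) =
      0 + A / Δx * (x - xi) + B / Δx * (x - xi) ^ 2 + c / Δx * (x - xi) ^ 3 := by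
    rw [hp]; field_simp; ring
  have hderiv_sq (x : ℝ) : Δx * (b + 2 * c * x) ^ 2 =
      Δx * B ^ 2 + 4 * Δx * B * c * (x - xi) + 4 * Δx * c ^ 2 * (x - xi) ^ 2 + 0 * (x - xi) ^ 3 := by
    ring
  have hvbar : vbar0 = B * Δx / 12 := by
    rw [← hmom0, integral_shifted_cubic hmoment]; field_simp; ring
  have hjump : ubarm1 - ubar0 + 12 * vbar0 = c * Δx ^ 2 := by
    rw [← havgm1, ← havg0, hvbar, integral_shifted_cubic hp_taylor, integral_shifted_cubic hp_taylor]
    field_simp; ring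
  rw [integral_shifted_cubic hderiv_sq, integral_const, smul_eq_mul, hjump, hvbar]
  ring
end

section
/- Let p₂ be the quadratic polynomial satisfying (1/Δx)∫_{I_i} p₂ dx = ū_i, (1/Δx)∫_{I_{i+1}} p₂ dx = ū_{i+1}, and (1/Δx)∫_{I_i} p₂(x)(x−x_i)/Δx dx = v̄_i on a uniform mesh of size Δx. Then its Jiang–Shu smoothness indicator on I_i equals 144 v̄_i² + (13/3)(ū_i − ū_{i+1} + 12 v̄_i)². -/
/-!
Expand the quadratic about the cell centre `m`: `p x = p m + p' m (x - m) + c (x - m)²`.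
Over a cell of width `h` centred at `m` the odd powers of `x - m` integrate to zero, so the
cell average is `p m + c h²/12`, the first moment is `p' m h / 12`, and the indicator is
`h² (p' m)² + (13/3) c² h⁴`. Thus `144 v̄ᵢ² = h² (p' xᵢ)²`, while
`ūᵢ - ūᵢ₊₁ = p xᵢ - p (xᵢ + h) = -(p' xᵢ h + c h²)`, so `ūᵢ - ūᵢ₊₁ + 12 v̄ᵢ = -c h²`.
-/

open intervalIntegral

theorem integral_cubic_centered (m h c₀ c₁ c₂ c₃ : ℝ) :
    ∫ x in (m - 1/2 * h)..(m + 1/2 * h), (c₀ + c₁ * (x - m) + c₂ * (x - m)^2 + c₃ * (x - m)^3)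
      = c₀ * h + c₂ * h^3 / 12 := by
  rw [integral_comp_sub_right (fun y => c₀ + c₁ * y + c₂ * y^2 + c₃ * y^3),
    integral_add, integral_add, integral_add, integral_const, integral_const_mul, integral_id,
    integral_const_mul, integral_pow, integral_const_mul, integral_pow]
  · simp only [smul_eq_mul]
    ring
  all_goals exact Continuous.intervalIntegrable (by fun_prop) _ _

section Quadratic

variable (a b c m h : ℝ)

theorem cell_average_quadratic (hh : h ≠ 0) :
    (1/h) * ∫ x in (m - 1/2 * h)..(m + 1/2 * h), (a + b * x + c * x^2)
      = a + b * m + c * m^2 + c * h^2 / 12 := by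
  rw [show (fun x => a + b * x + c * x^2) = fun x =>
      (a + b * m + c * m^2) + (b + 2 * c * m) * (x - m) + c * (x - m)^2 + 0 * (x - m)^3 from
      funext fun x => by ring, integral_cubic_centered]
  field_simp

theorem cell_moment_quadratic (hh : h ≠ 0) :
    (1/h) * ∫ x in (m - 1/2 * h)..(m + 1/2 * h), (a + b * x + c * x^2) * ((x - m) / h)
      = (b + 2 * c * m) * h / 12 := by
  rw [show (fun x => (a + b * x + c * x^2) * ((x - m) / h)) = fun x =>
      0 + (a + b * m + c * m^2) / h * (x - m) + (b + 2 * c * m) / h * (x - m)^2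
        + c / h * (x - m)^3 from
      funext fun x => by ring, integral_cubic_centered]
  field_simp
  ring

theorem smoothnessIndicator_quadratic :
    ((∫ x in (m - 1/2 * h)..(m + 1/2 * h), h * (b + 2 * c * x)^2)
      + ∫ _x in (m - 1/2 * h)..(m + 1/2 * h), h^3 * (2 * c)^2)
      = h^2 * (b + 2 * c * m)^2 + 13/3 * c^2 * h^4 := by
  rw [show (fun x => h * (b + 2 * c * x)^2) = fun x =>
      h * (b + 2 * c * m)^2 + 4 * h * c * (b + 2 * c * m) * (x - m) + 4 * h * c^2 * (x - m)^2
        + 0 * (x - m)^3 from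
      funext fun x => by ring, integral_cubic_centered, integral_const, smul_eq_mul]
  ring

end Quadratic

theorem stmt_13 (Δx xi ubar0 ubarp1 vbar0 : ℝ) (hΔx : 0 < Δx)
    (a b c : ℝ) (p : ℝ → ℝ)
    (hp : ∀ x, p x = a + b * x + c * x^2)
    (havg0 : (1/Δx) * ∫ x in (xi - 1/2 * Δx)..(xi + 1/2 * Δx), p x = ubar0)
    (havgp1 : (1/Δx) * ∫ x in (xi + 1/2 * Δx)..(xi + 3/2 * Δx), p x = ubarp1)
    (hmom0 : (1/Δx) * ∫ x in (xi - 1/2 * Δx)..(xi + 1/2 * Δx),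
        p x * ((x - xi)/Δx) = vbar0) :
    ((∫ x in (xi - 1/2 * Δx)..(xi + 1/2 * Δx), Δx * (b + 2*c*x)^2)
      + ∫ x in (xi - 1/2 * Δx)..(xi + 1/2 * Δx), Δx^3 * (2*c)^2)
      = 144 * vbar0^2 + (13/3) * (ubar0 - ubarp1 + 12 * vbar0)^2 := by
  simp only [hp] at havg0 havgp1 hmom0
  rw [show xi + 1/2 * Δx = (xi + Δx) - 1/2 * Δx by ring,
    show xi + 3/2 * Δx = (xi + Δx) + 1/2 * Δx by ring,
    cell_average_quadratic _ _ _ _ _ hΔx.ne'] at havgp1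
  rw [cell_average_quadratic _ _ _ _ _ hΔx.ne'] at havg0
  rw [cell_moment_quadratic _ _ _ _ _ hΔx.ne'] at hmom0
  rw [smoothnessIndicator_quadratic, ← havg0, ← havgp1, ← hmom0]
  ring
end

section
/- If a seminorm-type stability bound ‖u + ΔtL(u)‖ ≤ ‖u‖ holds for all u (forward Euler is TVD), then the third-order TVD Runge–Kutta method satisfies ‖uⁿ⁺¹‖ ≤ ‖uⁿ‖. -/
theorem stmt_16 {V : Type*} [AddCommGroup V] [Module ℝ V]
    (N : Seminorm ℝ V) (L : V → V) (Δt : ℝ) (hΔt : 0 < Δt)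
    (hstab : ∀ u : V, N (u + Δt • L u) ≤ N u)
    (un u1 u2 un1 : V)
    (hu1 : u1 = un + Δt • L un)
    (hu2 : u2 = (3/4 : ℝ) • un + (1/4 : ℝ) • u1 + (1/4 : ℝ) • (Δt • L u1))
    (hun1 : un1 = (1/3 : ℝ) • un + (2/3 : ℝ) • u2 + (2/3 : ℝ) • (Δt • L u2)) :
    N un1 ≤ N un := by
  have h1 : N u1 ≤ N un := hu1 ▸ hstab un
  have h2 : N u2 ≤ N un := by
    have hrw : u2 = (3/4 : ℝ) • un + (1/4 : ℝ) • (u1 + Δt • L u1) := by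
      rw [hu2, smul_add, add_assoc]
    calc N u2 ≤ N ((3/4 : ℝ) • un) + N ((1/4 : ℝ) • (u1 + Δt • L u1)) := by
          rw [hrw]; exact map_add_le_add N _ _
      _ = (3/4 : ℝ) * N un + (1/4 : ℝ) * N (u1 + Δt • L u1) := by
          rw [map_smul_eq_mul, map_smul_eq_mul]; norm_num
      _ ≤ (3/4 : ℝ) * N un + (1/4 : ℝ) * N un := by
          have := (hstab u1).trans h1
          nlinarith
      _ = N un := by ring
  have hrw : un1 = (1/3 : ℝ) • un + (2/3 : ℝ) • (u2 + Δt • L u2) := by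
    rw [hun1, smul_add, add_assoc]
  calc N un1 ≤ N ((1/3 : ℝ) • un) + N ((2/3 : ℝ) • (u2 + Δt • L u2)) := by
        rw [hrw]; exact map_add_le_add N _ _
    _ = (1/3 : ℝ) * N un + (2/3 : ℝ) * N (u2 + Δt • L u2) := by
        rw [map_smul_eq_mul, map_smul_eq_mul]; norm_num
    _ ≤ (1/3 : ℝ) * N un + (2/3 : ℝ) * N un := by
        have := (hstab u2).trans h2
        nlinarith
    _ = N un := by ring
end

section
/- Let p₀ be the degree-≤5 polynomial matching cell averages ū_{i-1}, ū_i, ū_{i+1} and first-order moments v̄_{i-1}, v̄_i, v̄_{i+1} on three consecutive uniform cells. Then p₀(x_i − (√5/10)Δx) = −((101√5/5400) + 1/24)ū_{i-1} + (13/12)ū_i + ((101√5/5400) − 1/24)ū_{i+1} − (3/20 + 841√5/13500)v̄_{i-1} − (10289√5/6750)v̄_i + (3/20 − 841√5/13500)v̄_{i+1}. -/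
/-!
The substitution `x = xi + Δx * t` turns the six data into the averages and first moments of
the quintic `q t = p (xi + Δx * t)` over the reference cells `[j - 1/2, j + 1/2]`, `j = -1, 0, 1`,
and the claimed formula into a fixed linear functional of `q`, independent of `xi` and `Δx`.
Being linear in `q`, the formula needs checking only on the monomials `t ^ k`, `k ≤ 5`,
where it is an exact computation using `√5 ^ 2 = 5`.
-/

open intervalIntegral Polynomial

noncomputable section

def cellAverage (f : ℝ → ℝ) (j : ℝ) : ℝ :=
  ∫ t in (j - 1/2)..(j + 1/2), f t

def cellMoment (f : ℝ → ℝ) (j : ℝ) : ℝ :=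
  ∫ t in (j - 1/2)..(j + 1/2), f t * (t - j)

def lobattoReconstruction (f : ℝ → ℝ) : ℝ :=
  -(101 * √5 / 5400 + 1/24) * cellAverage f (-1) + (13/12) * cellAverage f 0
    + (101 * √5 / 5400 - 1/24) * cellAverage f 1
    - (3/20 + 841 * √5 / 13500) * cellMoment f (-1)
    - (10289 * √5 / 6750) * cellMoment f 0
    + (3/20 - 841 * √5 / 13500) * cellMoment f 1

end

theorem cellAverage_pow (k : ℕ) (j : ℝ) :
    cellAverage (· ^ k) j = ((j + 1/2) ^ (k + 1) - (j - 1/2) ^ (k + 1)) / (k + 1) :=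
  integral_pow k

theorem cellMoment_pow (k : ℕ) (j : ℝ) :
    cellMoment (· ^ k) j = cellAverage (· ^ (k + 1)) j - j * cellAverage (· ^ k) j := by
  simp only [cellMoment, cellAverage, mul_sub, pow_succ]
  rw [integral_sub, integral_mul_const, mul_comm] <;>
    exact (by fun_prop : Continuous _).intervalIntegrable _ _

theorem cellAverage_sum_monomials (a : ℕ → ℝ) (n : ℕ) (j : ℝ) :
    cellAverage (fun t => ∑ k ∈ Finset.range n, a k * t ^ k) j
      = ∑ k ∈ Finset.range n, a k * cellAverage (· ^ k) j := by
  simp only [cellAverage]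
  rw [integral_finsetSum fun k _ => (by fun_prop : Continuous _).intervalIntegrable _ _]
  simp only [integral_const_mul]

theorem cellMoment_sum_monomials (a : ℕ → ℝ) (n : ℕ) (j : ℝ) :
    cellMoment (fun t => ∑ k ∈ Finset.range n, a k * t ^ k) j
      = ∑ k ∈ Finset.range n, a k * cellMoment (· ^ k) j := by
  simp only [cellMoment, Finset.sum_mul, mul_assoc]
  rw [integral_finsetSum fun k _ => (by fun_prop : Continuous _).intervalIntegrable _ _]
  simp only [integral_const_mul]

theorem lobattoReconstruction_sum_monomials (a : ℕ → ℝ) (n : ℕ) :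
    lobattoReconstruction (fun t => ∑ k ∈ Finset.range n, a k * t ^ k)
      = ∑ k ∈ Finset.range n, a k * lobattoReconstruction (· ^ k) := by
  simp only [lobattoReconstruction, cellAverage_sum_monomials, cellMoment_sum_monomials,
    Finset.mul_sum, ← Finset.sum_add_distrib, ← Finset.sum_sub_distrib]
  exact Finset.sum_congr rfl fun k _ => by ring

theorem lobattoReconstruction_pow {k : ℕ} (hk : k < 6) :
    lobattoReconstruction (· ^ k) = (-√5 / 10) ^ k := by
  have hs : √5 ^ 2 = 5 := Real.sq_sqrt (by norm_num)
  simp only [lobattoReconstruction, cellMoment_pow, cellAverage_pow]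
  interval_cases k <;> norm_num <;> grind

theorem lobattoReconstruction_eval {P : ℝ[X]} (hP : P.natDegree ≤ 5) :
    lobattoReconstruction P.eval = P.eval (-√5 / 10) := by
  simp only [eval_eq_sum_range' (Nat.lt_succ_of_le hP), lobattoReconstruction_sum_monomials]
  exact Finset.sum_congr rfl fun k hk => by
    rw [lobattoReconstruction_pow (Finset.mem_range.mp hk)]

theorem cellAverage_comp_affine (f : ℝ → ℝ) {Δx : ℝ} (hΔx : Δx ≠ 0) (xi j : ℝ) :
    cellAverage (fun t => f (xi + Δx * t)) j
      = (1 / Δx) * ∫ x in (xi + Δx * (j - 1/2))..(xi + Δx * (j + 1/2)), f x := by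
  rw [cellAverage, integral_comp_add_mul f hΔx, smul_eq_mul, ← one_div]

theorem cellMoment_comp_affine (f : ℝ → ℝ) {Δx : ℝ} (hΔx : Δx ≠ 0) (xi j : ℝ) :
    cellMoment (fun t => f (xi + Δx * t)) j
      = (1 / Δx) * ∫ x in (xi + Δx * (j - 1/2))..(xi + Δx * (j + 1/2)),
          f x * ((x - (xi + Δx * j)) / Δx) := by
  rw [← cellAverage_comp_affine (fun x => f x * ((x - (xi + Δx * j)) / Δx)) hΔx, cellMoment,
    cellAverage]
  congr with t
  field_simp
  ring

theorem stmt_17 (Δx xi ubarm1 ubar0 ubarp1 vbarm1 vbar0 vbarp1 : ℝ) (hΔx : 0 < Δx)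
    (c0 c1 c2 c3 c4 c5 : ℝ) (p : ℝ → ℝ)
    (hp : ∀ x, p x = c0 + c1 * x + c2 * x^2 + c3 * x^3 + c4 * x^4 + c5 * x^5)
    (havgm1 : (1/Δx) * ∫ x in (xi - 3/2 * Δx)..(xi - 1/2 * Δx), p x = ubarm1)
    (havg0 : (1/Δx) * ∫ x in (xi - 1/2 * Δx)..(xi + 1/2 * Δx), p x = ubar0)
    (havgp1 : (1/Δx) * ∫ x in (xi + 1/2 * Δx)..(xi + 3/2 * Δx), p x = ubarp1)
    (hmomm1 : (1/Δx) * ∫ x in (xi - 3/2 * Δx)..(xi - 1/2 * Δx),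
        p x * ((x - (xi - Δx))/Δx) = vbarm1)
    (hmom0 : (1/Δx) * ∫ x in (xi - 1/2 * Δx)..(xi + 1/2 * Δx),
        p x * ((x - xi)/Δx) = vbar0)
    (hmomp1 : (1/Δx) * ∫ x in (xi + 1/2 * Δx)..(xi + 3/2 * Δx),
        p x * ((x - (xi + Δx))/Δx) = vbarp1) :
    p (xi - Real.sqrt 5 / 10 * Δx)
      = -(101 * Real.sqrt 5 / 5400 + 1/24) * ubarm1 + (13/12) * ubar0
        + (101 * Real.sqrt 5 / 5400 - 1/24) * ubarp1
        - (3/20 + 841 * Real.sqrt 5 / 13500) * vbarm1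
        - (10289 * Real.sqrt 5 / 6750) * vbar0
        + (3/20 - 841 * Real.sqrt 5 / 13500) * vbarp1 := by
  set P : ℝ[X] := C c0 + C c1 * X + C c2 * X ^ 2 + C c3 * X ^ 3 + C c4 * X ^ 4 + C c5 * X ^ 5
    with hPdef
  set Q : ℝ[X] := P.comp (C xi + C Δx * X)
  have hpQ (t : ℝ) : p (xi + Δx * t) = Q.eval t := by simp [hp, P, Q]
  have hQ : Q.natDegree ≤ 5 := by
    have hP : P.natDegree ≤ 5 := by rw [hPdef]; compute_degree!
    have hA : (C xi + C Δx * X).natDegree ≤ 1 := by compute_degree!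
    simpa using natDegree_comp_le.trans (Nat.mul_le_mul hP hA)
  calc p (xi - √5 / 10 * Δx) = Q.eval (-√5 / 10) := by rw [← hpQ]; ring_nf
    _ = lobattoReconstruction Q.eval := (lobattoReconstruction_eval hQ).symm
    _ = _ := by
      rw [← funext hpQ, lobattoReconstruction]
      simp only [cellAverage_comp_affine p hΔx.ne', cellMoment_comp_affine p hΔx.ne']
      rw [← havgm1, ← havg0, ← havgp1, ← hmomm1, ← hmom0, ← hmomp1]
      -- `ring_nf` also normalises the integration bounds and integrands under the binders
      ring_nf
end

section
/- Given six data (ū_{i-1}, ū_i, ū_{i+1}, v̄_{i-1}, v̄_i, v̄_{i+1}), there exists a unique polynomial p of degree at most 5 on a uniform three-cell stencil such that (1/Δx)∫_{I_{i+j}} p dx = ū_{i+j} and (1/Δx)∫_{I_{i+j}} p(x)(x−x_{i+j})/Δx dx = v̄_{i+j} for j = −1, 0, 1. -/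
/-!
Substituting `x = xi + t * Δx` turns the six conditions into moment conditions, on the reference
cells `[j - 1/2, j + 1/2]` (`j = -1, 0, 1`), for the polynomial `t ↦ p (xi + t * Δx)`; these no
longer depend on `xi` and `Δx`. In the monomial basis in `t` they form a linear system with a
fixed rational `6 × 6` matrix, whose determinant is `-1/175`.
-/

open intervalIntegral Polynomial
open scoped Matrix

noncomputable def stencilPoly (xi Δx : ℝ) {n : ℕ} (c : Fin n → ℝ) : ℝ[X] :=
  ∑ i, C (c i) * ((X - C xi) * C Δx⁻¹) ^ (i : ℕ)

lemma degree_stencilPoly_lt (xi Δx : ℝ) {n : ℕ} (c : Fin n → ℝ) :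
    (stencilPoly xi Δx c).degree < n := by
  refine (degree_sum_le _ _).trans_lt <| (Finset.sup_lt_iff (WithBot.bot_lt_coe n)).2 fun i _ => ?_
  have hlin : ((X - C xi) * C Δx⁻¹).natDegree ≤ 1 := by compute_degree
  refine degree_le_natDegree.trans_lt (WithBot.coe_lt_coe.2 ?_)
  calc (C (c i) * ((X - C xi) * C Δx⁻¹) ^ (i : ℕ)).natDegree
      ≤ (i : ℕ) * 1 := (natDegree_C_mul_le _ _).trans (natDegree_pow_le_of_le _ hlin)
    _ < n := by simp

lemma eval_stencilPoly (xi Δx x : ℝ) {n : ℕ} (c : Fin n → ℝ) :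
    (stencilPoly xi Δx c).eval x = ∑ i, c i * ((x - xi) / Δx) ^ (i : ℕ) := by
  simp [stencilPoly, eval_finsetSum, div_eq_mul_inv]

lemma exists_eq_stencilPoly {xi Δx : ℝ} (h : Δx ≠ 0) {n : ℕ} {p : ℝ[X]} (hp : p.natDegree < n) :
    ∃ c : Fin n → ℝ, p = stencilPoly xi Δx c := by
  set q := p.comp (C Δx * X + C xi)
  have hq : q.natDegree < n := by
    have hlin : (C Δx * X + C xi).natDegree ≤ 1 := by compute_degree
    exact natDegree_comp_le.trans_lt <| (Nat.mul_le_mul_left _ hlin).trans_lt (by simpa using hp)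
  have hinv : (C Δx * X + C xi).comp ((X - C xi) * C Δx⁻¹) = X := by
    simp only [add_comp, mul_comp, C_comp, X_comp]
    rw [mul_left_comm, ← C_mul, mul_inv_cancel₀ h, C_1, mul_one, sub_add_cancel]
  refine ⟨fun i => q.coeff i, ?_⟩
  calc p = q.comp ((X - C xi) * C Δx⁻¹) := by rw [comp_assoc, hinv, comp_X]
    _ = _ := by
      conv_lhs => rw [q.as_sum_range_C_mul_X_pow' hq]
      simp [stencilPoly, sum_comp,
        Fin.sum_univ_eq_sum_range (fun i => C (q.coeff i) * ((X - C xi) * C Δx⁻¹) ^ i)]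

noncomputable def unitCellMoment (j : ℝ) (k i : ℕ) : ℝ :=
  ∫ t in (j - 1/2)..(j + 1/2), t ^ i * (t - j) ^ k

lemma unitCellMoment_zero (j : ℝ) (i : ℕ) :
    unitCellMoment j 0 i = ((j + 1/2) ^ (i + 1) - (j - 1/2) ^ (i + 1)) / (i + 1) := by
  simp [unitCellMoment, integral_pow]

lemma unitCellMoment_one (j : ℝ) (i : ℕ) :
    unitCellMoment j 1 i = unitCellMoment j 0 (i + 1) - j * unitCellMoment j 0 i := by
  have hsplit : ∀ t : ℝ, t ^ i * (t - j) ^ 1 = t ^ (i + 1) - j * t ^ i := fun t => by ring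
  simp only [unitCellMoment, hsplit, pow_zero, mul_one]
  rw [integral_sub, integral_const_mul]
  all_goals exact (by fun_prop : Continuous _).intervalIntegrable _ _

lemma integral_cell_stencilPoly_mul_pow {xi Δx : ℝ} (h : Δx ≠ 0) {n : ℕ} (c : Fin n → ℝ) (j : ℝ) (k : ℕ) :
    (1 / Δx) * ∫ x in (xi + (j - 1/2) * Δx)..(xi + (j + 1/2) * Δx),
        (stencilPoly xi Δx c).eval x * ((x - (xi + j * Δx)) / Δx) ^ k
      = ∑ i : Fin n, unitCellMoment j k i * c i := by
  have hsubst := integral_comp_mul_add (a := j - 1/2) (b := j + 1/2)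
    (fun x => (stencilPoly xi Δx c).eval x * ((x - (xi + j * Δx)) / Δx) ^ k) h xi
  have hint : ∀ i : Fin n, IntervalIntegrable (fun t : ℝ => c i * (t ^ (i : ℕ) * (t - j) ^ k))
      MeasureTheory.volume (j - 1/2) (j + 1/2) :=
    fun i => (by fun_prop : Continuous _).intervalIntegrable _ _
  rw [show xi + (j - 1/2) * Δx = Δx * (j - 1/2) + xi by ring,
    show xi + (j + 1/2) * Δx = Δx * (j + 1/2) + xi by ring, one_div, ← smul_eq_mul, ← hsubst]
  simp_rw [unitCellMoment, mul_comm _ (c _), ← integral_const_mul,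
    ← integral_finsetSum fun i _ => hint i, eval_stencilPoly, Finset.sum_mul]
  refine integral_congr fun t _ => ?_
  have hcell : (Δx * t + xi - xi) / Δx = t := by field_simp; ring
  have hweight : (Δx * t + xi - (xi + j * Δx)) / Δx = t - j := by field_simp; ring
  simp only [hcell, hweight, mul_assoc]

noncomputable def hermiteMomentMatrix : Matrix (Fin 6) (Fin 6) ℝ :=
  Matrix.of ![fun i => unitCellMoment (-1) 0 i, fun i => unitCellMoment 0 0 i,
    fun i => unitCellMoment 1 0 i, fun i => unitCellMoment (-1) 1 i,
    fun i => unitCellMoment 0 1 i, fun i => unitCellMoment 1 1 i]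

lemma hermiteMomentMatrix_eq : hermiteMomentMatrix = !![
    1, -1, 13/12, -5/4, 121/80, -91/48;
    1, 0, 1/12, 0, 1/80, 0;
    1, 1, 13/12, 5/4, 121/80, 91/48;
    0, 1/12, -1/6, 21/80, -23/60, 731/1344;
    0, 1/12, 0, 1/80, 0, 1/448;
    0, 1/12, 1/6, 21/80, 23/60, 731/1344] := by
  ext r i
  fin_cases r <;> fin_cases i <;>
    simp [hermiteMomentMatrix, unitCellMoment_one, unitCellMoment_zero] <;> norm_num

lemma det_hermiteMomentMatrix : hermiteMomentMatrix.det = -1/175 := by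
  rw [hermiteMomentMatrix_eq]
  simp +decide [Matrix.det_succ_row_zero, Fin.sum_univ_succ, Fin.succAbove]
  norm_num

noncomputable def stencilMoments (Δx xi : ℝ) (p : ℝ[X]) : Fin 6 → ℝ :=
  ![(1/Δx) * (∫ x in (xi - 3/2 * Δx)..(xi - 1/2 * Δx), p.eval x),
    (1/Δx) * (∫ x in (xi - 1/2 * Δx)..(xi + 1/2 * Δx), p.eval x),
    (1/Δx) * (∫ x in (xi + 1/2 * Δx)..(xi + 3/2 * Δx), p.eval x),
    (1/Δx) * (∫ x in (xi - 3/2 * Δx)..(xi - 1/2 * Δx), p.eval x * ((x - (xi - Δx))/Δx)),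
    (1/Δx) * (∫ x in (xi - 1/2 * Δx)..(xi + 1/2 * Δx), p.eval x * ((x - xi)/Δx)),
    (1/Δx) * (∫ x in (xi + 1/2 * Δx)..(xi + 3/2 * Δx), p.eval x * ((x - (xi + Δx))/Δx))]

lemma stencilMoments_stencilPoly {xi Δx : ℝ} (h : Δx ≠ 0) (c : Fin 6 → ℝ) :
    stencilMoments Δx xi (stencilPoly xi Δx c) = hermiteMomentMatrix *ᵥ c := by
  ext r
  fin_cases r <;> dsimp [stencilMoments]
  · convert integral_cell_stencilPoly_mul_pow (xi := xi) h c (-1) 0 using 4 <;> first | rfl | ring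
  · convert integral_cell_stencilPoly_mul_pow (xi := xi) h c 0 0 using 4 <;> first | rfl | ring
  · convert integral_cell_stencilPoly_mul_pow (xi := xi) h c 1 0 using 4 <;> first | rfl | ring
  · convert integral_cell_stencilPoly_mul_pow (xi := xi) h c (-1) 1 using 4 <;> first | rfl | ring
  · convert integral_cell_stencilPoly_mul_pow (xi := xi) h c 0 1 using 4 <;> first | rfl | ring
  · convert integral_cell_stencilPoly_mul_pow (xi := xi) h c 1 1 using 4 <;> first | rfl | ring

theorem stmt_19 (Δx xi ubarm1 ubar0 ubarp1 vbarm1 vbar0 vbarp1 : ℝ) (hΔx : 0 < Δx) :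
    ∃! p : Polynomial ℝ, p.degree ≤ 5
      ∧ (1/Δx) * (∫ x in (xi - 3/2 * Δx)..(xi - 1/2 * Δx), p.eval x) = ubarm1
      ∧ (1/Δx) * (∫ x in (xi - 1/2 * Δx)..(xi + 1/2 * Δx), p.eval x) = ubar0
      ∧ (1/Δx) * (∫ x in (xi + 1/2 * Δx)..(xi + 3/2 * Δx), p.eval x) = ubarp1
      ∧ (1/Δx) * (∫ x in (xi - 3/2 * Δx)..(xi - 1/2 * Δx),
          p.eval x * ((x - (xi - Δx))/Δx)) = vbarm1
      ∧ (1/Δx) * (∫ x in (xi - 1/2 * Δx)..(xi + 1/2 * Δx),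
          p.eval x * ((x - xi)/Δx)) = vbar0
      ∧ (1/Δx) * (∫ x in (xi + 1/2 * Δx)..(xi + 3/2 * Δx),
          p.eval x * ((x - (xi + Δx))/Δx)) = vbarp1 := by
  have hΔx₀ : Δx ≠ 0 := hΔx.ne'
  have hM : IsUnit hermiteMomentMatrix := by
    rw [Matrix.isUnit_iff_isUnit_det, det_hermiteMomentMatrix]
    norm_num
  suffices ∃! p : ℝ[X], p.degree ≤ 5 ∧
      stencilMoments Δx xi p = ![ubarm1, ubar0, ubarp1, vbarm1, vbar0, vbarp1] by
    simpa only [stencilMoments, Matrix.vecCons_inj, and_true] using this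
  obtain ⟨c, hc⟩ := Matrix.mulVec_surjective_iff_isUnit.mpr hM
    ![ubarm1, ubar0, ubarp1, vbarm1, vbar0, vbarp1]
  refine ⟨stencilPoly xi Δx c, ⟨Order.le_of_lt_succ (degree_stencilPoly_lt xi Δx c), ?_⟩, ?_⟩
  · rw [stencilMoments_stencilPoly hΔx₀, hc]
  rintro q ⟨hq, hmom⟩
  obtain ⟨c', rfl⟩ :=
    exists_eq_stencilPoly (xi := xi) (n := 6) hΔx₀ ((natDegree_le_of_degree_le hq).trans_lt (by norm_num))
  have hcc' : hermiteMomentMatrix *ᵥ c' = hermiteMomentMatrix *ᵥ c := by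
    rw [← stencilMoments_stencilPoly hΔx₀, hmom, hc]
  rw [Matrix.mulVec_injective_iff_isUnit.mpr hM hcc']
end
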